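/- Let (M, μ) be a measure space and let Ω : M × M → ℂ be jointly measurable and satisfy propagator conditions (1), (3), (4) and (5). Then: for every Ψ ∈ L²(M, μ) and every x ∈ M the function y ↦ Ψ(y)Ω(y,x) is μ-integrable; the formula (P_ΩΨ)(x) = ∫_M Ψ(y)Ω(y,x) dμ(y) defines a bounded linear operator P_Ω on L²(M, μ); and P_Ω is an orthogonal projection, i.e. P_Ω² = P_Ω and P_Ω* = P_Ω (so in particular ‖P_Ω‖ ≤ 1). -/

import Mathlib

/-!
By (3) and (4), `‖Ω x ·‖²` is integrable, so the sections `k x = Ω x ·` lie in `L²`, and they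
reproduce themselves: `⟪k x, k y⟫ = ∫ Ω y z Ω z x dμ(z) = Ω y x = k y x`. The functions `Φ` with
`⟪k x, Φ⟫ = Φ x` for a.e. `x` form a closed subspace, hence contain the closed span `V` of the
sections. The orthogonal projection `P` onto `V` is then the integral operator:
`(PΨ) x = ⟪k x, PΨ⟫ = ⟪P k x, Ψ⟫ = ⟪k x, Ψ⟫ = ∫ Ψ y Ω y x dμ(y)`.
-/

open MeasureTheory Filter Set Submodule

section Reproducing

variable {M 𝕜 : Type*} [MeasurableSpace M] {μ : Measure M} [RCLike 𝕜]

def reproducedSubmodule (k : M → Lp 𝕜 2 μ) : Submodule 𝕜 (Lp 𝕜 2 μ) where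
  carrier := {Φ | ∀ᵐ x ∂μ, inner 𝕜 (k x) Φ = Φ x}
  zero_mem' := by
    filter_upwards [Lp.coeFn_zero 𝕜 2 μ] with x hx
    rw [inner_zero_right, hx, Pi.zero_apply]
  add_mem' {Φ₁ Φ₂} h₁ h₂ := by
    filter_upwards [h₁, h₂, Lp.coeFn_add Φ₁ Φ₂] with x hx₁ hx₂ hadd
    rw [inner_add_right, hx₁, hx₂, hadd, Pi.add_apply]
  smul_mem' a {Φ} h := by
    filter_upwards [h, Lp.coeFn_smul a Φ] with x hx hsmul
    rw [inner_smul_right, hx, hsmul, Pi.smul_apply, smul_eq_mul]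

/-- Along a subsequence, `L²` convergence is almost everywhere convergence, while
`⟪k x, ·⟫` is continuous for each `x`. -/
theorem isClosed_reproducedSubmodule (k : M → Lp 𝕜 2 μ) :
    IsClosed (reproducedSubmodule k : Set (Lp 𝕜 2 μ)) := by
  refine isClosed_of_closure_subset fun Φ hΦ => ?_
  obtain ⟨u, hu_mem, hu_lim⟩ := mem_closure_iff_seq_limit.mp hΦ
  obtain ⟨n, hn_mono, hn_ae⟩ := (tendstoInMeasure_of_tendsto_Lp hu_lim).exists_seq_tendsto_ae
  have hu_rep : ∀ᵐ x ∂μ, ∀ i, inner 𝕜 (k x) (u (n i)) = u (n i) x :=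
    ae_all_iff.2 fun i => hu_mem (n i)
  filter_upwards [hn_ae, hu_rep] with x hx hrep
  have h_inner : Tendsto (fun i => inner 𝕜 (k x) (u (n i))) atTop (nhds (inner 𝕜 (k x) Φ)) :=
    ((continuous_const.inner continuous_id).tendsto Φ).comp
      (hu_lim.comp hn_mono.tendsto_atTop)
  exact tendsto_nhds_unique h_inner (hx.congr fun i => (hrep i).symm)

theorem topologicalClosure_span_le_reproducedSubmodule {k : M → Lp 𝕜 2 μ}
    (hk : ∀ y, k y ∈ reproducedSubmodule k) :
    (span 𝕜 (range k)).topologicalClosure ≤ reproducedSubmodule k :=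
  topologicalClosure_minimal _ (span_le.2 (range_subset_iff.2 hk))
    (isClosed_reproducedSubmodule k)

theorem ae_starProjection_closedSpan_apply {k : M → Lp 𝕜 2 μ}
    (hk : ∀ y, k y ∈ reproducedSubmodule k) (Ψ : Lp 𝕜 2 μ) :
    ∀ᵐ x ∂μ, (span 𝕜 (range k)).topologicalClosure.starProjection Ψ x = inner 𝕜 (k x) Ψ := by
  set V := (span 𝕜 (range k)).topologicalClosure
  have hk_mem : ∀ x, k x ∈ V := fun x => le_topologicalClosure _ (subset_span ⟨x, rfl⟩)
  filter_upwards [topologicalClosure_span_le_reproducedSubmodule hk (V.starProjection_apply_mem Ψ)]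
    with x hx
  rw [← hx, ← inner_starProjection_left_eq_right, starProjection_eq_self_iff.2 (hk_mem x)]

end Reproducing

section Kernel

variable {M 𝕜 : Type*} [MeasurableSpace M] {μ : Measure M} [RCLike 𝕜]

open ComplexConjugate

theorem memLp_two_of_integrable_mul_conj {f : M → 𝕜} (hf : AEStronglyMeasurable f μ)
    (h : Integrable (fun y => f y * conj (f y)) μ) : MemLp f 2 μ := by
  rw [memLp_two_iff_integrable_sq_norm hf]
  refine h.re.congr (ae_of_all _ fun y => ?_)
  simp only [RCLike.mul_conj, ← RCLike.ofReal_pow, RCLike.ofReal_re]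

variable {Ω : M → M → 𝕜}

def kernelSection (hΩ : ∀ x, MemLp (Ω x) 2 μ) (x : M) : Lp 𝕜 2 μ := (hΩ x).toLp (Ω x)

theorem kernelSection_inner_eq_integrand (hΩ : ∀ x, MemLp (Ω x) 2 μ)
    (hΩ_conj : ∀ x y, Ω x y = conj (Ω y x)) (Ψ : Lp 𝕜 2 μ) (x : M) :
    (fun y => inner 𝕜 (kernelSection hΩ x y) (Ψ y)) =ᵐ[μ] fun y => Ψ y * Ω y x := by
  filter_upwards [(hΩ x).coeFn_toLp] with y hy
  rw [kernelSection, hy, RCLike.inner_apply, ← hΩ_conj y x, mul_comm]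

theorem integrable_mul_kernel (hΩ : ∀ x, MemLp (Ω x) 2 μ)
    (hΩ_conj : ∀ x y, Ω x y = conj (Ω y x)) (Ψ : Lp 𝕜 2 μ) (x : M) :
    Integrable (fun y => Ψ y * Ω y x) μ :=
  (L2.integrable_inner _ Ψ).congr (kernelSection_inner_eq_integrand hΩ hΩ_conj Ψ x)

theorem inner_kernelSection (hΩ : ∀ x, MemLp (Ω x) 2 μ)
    (hΩ_conj : ∀ x y, Ω x y = conj (Ω y x)) (Ψ : Lp 𝕜 2 μ) (x : M) :
    inner 𝕜 (kernelSection hΩ x) Ψ = ∫ y, Ψ y * Ω y x ∂μ := by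
  rw [L2.inner_def]
  exact integral_congr_ae (kernelSection_inner_eq_integrand hΩ hΩ_conj Ψ x)

theorem kernelSection_mem_reproducedSubmodule (hΩ : ∀ x, MemLp (Ω x) 2 μ)
    (hΩ_conj : ∀ x y, Ω x y = conj (Ω y x))
    (hΩ_idem : ∀ x y, ∫ z, Ω x z * Ω z y ∂μ = Ω x y) (y : M) :
    kernelSection hΩ y ∈ reproducedSubmodule (kernelSection hΩ) := by
  have h_section : (kernelSection hΩ y : M → 𝕜) =ᵐ[μ] Ω y := (hΩ y).coeFn_toLp
  filter_upwards [h_section] with x hx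
  rw [hx, inner_kernelSection hΩ hΩ_conj, ← hΩ_idem y x]
  exact integral_congr_ae (h_section.mono fun z hz => by simp only [hz])

end Kernel

theorem propagator_projection_exists
    {M : Type*} [MeasurableSpace M] (μ : Measure M)
    (Ω : M → M → ℂ)
    (hmeas : Measurable fun p : M × M => Ω p.1 p.2)
    (h3 : ∀ x y, Ω x y = (starRingEnd ℂ) (Ω y x))
    (h4int : ∀ x y, Integrable (fun z => Ω x z * Ω z y) μ)
    (h4 : ∀ x y, ∫ z, Ω x z * Ω z y ∂μ = Ω x y) :
    (∀ Ψ : Lp ℂ 2 μ, ∀ x, Integrable (fun y => Ψ y * Ω y x) μ) ∧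
    ∃ P : Lp ℂ 2 μ →L[ℂ] Lp ℂ 2 μ,
      (∀ Ψ : Lp ℂ 2 μ, ∀ᵐ x ∂μ, (P Ψ) x = ∫ y, Ψ y * Ω y x ∂μ) ∧
      P.comp P = P ∧ ContinuousLinearMap.adjoint P = P ∧ ‖P‖ ≤ 1 := by
  have hΩ : ∀ x, MemLp (Ω x) 2 μ := fun x =>
    memLp_two_of_integrable_mul_conj (hmeas.comp measurable_prodMk_left).aestronglyMeasurable
      ((h4int x x).congr (ae_of_all _ fun z => by simp only [h3 z x]))
  set V := (span ℂ (range (kernelSection hΩ))).topologicalClosure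
  refine ⟨integrable_mul_kernel hΩ h3, V.starProjection, fun Ψ => ?_,
    V.isIdempotentElem_starProjection, (isSelfAdjoint_starProjection V).adjoint_eq,
    V.starProjection_norm_le⟩
  filter_upwards [ae_starProjection_closedSpan_apply
    (kernelSection_mem_reproducedSubmodule hΩ h3 h4) Ψ] with x hx
  rw [hx, inner_kernelSection hΩ h3]
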